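/- Let m ≥ 1 and let G = C₄ᵐ × C₂ with generators a₁,…,a_m of the order-4 factors and h of the order-2 factor. In 𝔽₂[G], let u_m = ∏_{i=1}^{m} (a_i + a_i² + a_i³) and u = 1 + h·u_m, and let 𝒞 be the code generated by u. Then 𝒞 is self-dual: 𝒞 equals its orthogonal complement with respect to the coefficientwise bilinear form ⟨x, y⟩ = Σ_{g∈G} x_g·y_g on 𝔽₂[G]. -/

import Mathlib

noncomputable section

open MonoidAlgebra

/-- The code generated by `u` in a group algebra: the `R`-span of `{g • u : g ∈ G}`. -/
def codeGen {R : Type*} [CommSemiring R] {G : Type*} [Monoid G]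
    (u : MonoidAlgebra R G) : Submodule R (MonoidAlgebra R G) :=
  Submodule.span R (Set.range fun g : G => MonoidAlgebra.of R G g * u)

/-- The weight (support size) of an element of a group algebra. -/
def wt {R : Type*} [Semiring R] {G : Type*} (x : MonoidAlgebra R G) : ℕ :=
  x.coeff.support.card

/-- The minimum distance of the code generated by `u`: the least weight of a nonzero
element of the code. -/
def minDist {R : Type*} [CommSemiring R] {G : Type*} [Monoid G]
    (u : MonoidAlgebra R G) : ℕ :=
  sInf {n | ∃ x ∈ codeGen u, x ≠ 0 ∧ wt x = n}

/-- The group `C₄ᵐ × C₂`, written multiplicatively. -/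
abbrev Gp (m : ℕ) : Type := Multiplicative ((Fin m → ZMod 4) × ZMod 2)

/-- The generator `aᵢ` of the `i`-th copy of `C₄`. -/
def agen (m : ℕ) (i : Fin m) : Gp m := Multiplicative.ofAdd (Pi.single i 1, 0)

/-- The generator `h` of the `C₂` factor. -/
def hgen (m : ℕ) : Gp m := Multiplicative.ofAdd (0, 1)

/-- `u_m = ∏ᵢ (aᵢ + aᵢ² + aᵢ³)` in `𝔽₂[C₄ᵐ × C₂]`. -/
def um (m : ℕ) : MonoidAlgebra (ZMod 2) (Gp m) :=
  ∏ i : Fin m,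
    (of (ZMod 2) (Gp m) (agen m i) + of (ZMod 2) (Gp m) (agen m i) ^ 2 +
      of (ZMod 2) (Gp m) (agen m i) ^ 3)

/-- `u = 1 + h·u_m`. -/
def uu (m : ℕ) : MonoidAlgebra (ZMod 2) (Gp m) :=
  1 + of (ZMod 2) (Gp m) (hgen m) * um m

/-- The coefficientwise bilinear form `⟨x, y⟩ = ∑_g x_g · y_g` on a group algebra. -/
def bform {R : Type*} [Semiring R] {G : Type*} (x y : MonoidAlgebra R G) : R :=
  x.coeff.sum fun g c => c * y.coeff g


/-!
Write `u = 1 + h v` with `v ∈ 𝔽₂[H]`, where `H = C₄ᵐ` is the index-two subgroup of even elements.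
For the coefficientwise form, `⟨g u, y⟩` is the coefficient of `g⁻¹` in `u y*`, where `*` is the
involution `g ↦ g⁻¹`; since `u* = u`, the dual of the code `𝔽₂[G] u` is the annihilator of `u`.
As `h² = 1` and `v² = 1`, we get `u² = 0`, so the code lies in its dual. Conversely, split
`y = a + b h` with `a, b ∈ 𝔽₂[H]`: then `u y = 0` forces `b = a v`, i.e. `y = a u`.
-/

namespace GroupCode

variable {k G : Type*}

instance charP [CommRing k] [Monoid G] (p : ℕ) [CharP k p] : CharP k[G] p :=
  charP_of_injective_algebraMap' k p

section CodeGen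

variable [CommSemiring k] [Monoid G]

lemma codeGen_eq_restrictScalars_span (u : k[G]) :
    codeGen u = (Ideal.span {u}).restrictScalars k := by
  refine le_antisymm (Submodule.span_le.2 ?_) fun x hx => ?_
  · rintro _ ⟨g, rfl⟩
    exact Ideal.mul_mem_left _ _ (Ideal.mem_span_singleton_self u)
  · obtain ⟨c, rfl⟩ := Ideal.mem_span_singleton'.1 hx
    clear hx
    induction c using MonoidAlgebra.induction_linear with
    | zero => simp
    | add c c' hc hc' => simpa [add_mul] using add_mem hc hc'
    | single g r =>
      rw [← smul_of, smul_mul_assoc]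
      exact Submodule.smul_mem _ r (Submodule.subset_span ⟨g, rfl⟩)

lemma mem_codeGen_iff {u x : k[G]} : x ∈ codeGen u ↔ ∃ c, c * u = x := by
  rw [codeGen_eq_restrictScalars_span, Submodule.restrictScalars_mem, Ideal.mem_span_singleton']

end CodeGen

section Involution

variable [CommSemiring k] [CommGroup G]

variable (k G) in
def involution : k[G] ≃ₐ[k] k[G] := domCongr k k (MulEquiv.inv G)

@[simp]
lemma involution_single (g : G) (r : k) : involution k G (single g r) = single g⁻¹ r := by
  simp [involution]

lemma involution_of (g : G) : involution k G (of k G g) = of k G g⁻¹ := by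
  simp [of_apply]

@[simp]
lemma coeff_involution (x : k[G]) (g : G) : (involution k G x).coeff g = x.coeff g⁻¹ := by
  simp [involution]

@[simp]
lemma involution_involution (x : k[G]) : involution k G (involution k G x) = x := by
  ext; simp

lemma bform_eq_coeff_mul_involution (x y : k[G]) :
    bform x y = (x * involution k G y).coeff 1 := by
  simp [bform, coeff_mul_apply_left]

lemma forall_bform_codeGen_eq_zero_iff {u y : k[G]} :
    (∀ x ∈ codeGen u, bform x y = 0) ↔ u * involution k G y = 0 := by
  simp only [mem_codeGen_iff, forall_exists_index, forall_apply_eq_imp_iff,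
    bform_eq_coeff_mul_involution, mul_assoc]
  refine ⟨fun h => MonoidAlgebra.ext <| Finsupp.ext fun g => ?_, fun h c => by simp [h]⟩
  simpa using h (single g⁻¹ 1)

lemma forall_bform_codeGen_eq_zero_iff_of_involution_eq {u y : k[G]}
    (hu : involution k G u = u) : (∀ x ∈ codeGen u, bform x y = 0) ↔ u * y = 0 := by
  rw [forall_bform_codeGen_eq_zero_iff, ← map_eq_zero_iff _ (involution k G).injective, map_mul,
    involution_involution, hu]

end Involution

section Restrict

variable [Semiring k]

open Classical in
def restrict (s : Set G) : k[G] →+ k[G] :=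
  coeffAddEquiv.symm.toAddMonoidHom.comp <|
    (Finsupp.filterAddHom (· ∈ s)).comp coeffAddEquiv.toAddMonoidHom

lemma restrict_single_of_mem {s : Set G} {g : G} (hg : g ∈ s) (r : k) :
    restrict s (single g r) = single g r := by
  classical
  simp [restrict, coeffAddEquiv, Finsupp.filterAddHom, Finsupp.filter_single_of_pos _ hg]

lemma restrict_single_of_notMem {s : Set G} {g : G} (hg : g ∉ s) (r : k) :
    restrict s (single g r) = 0 := by
  classical
  simp [restrict, coeffAddEquiv, Finsupp.filterAddHom, Finsupp.filter_single_of_neg _ hg]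

end Restrict

section RestrictSubgroup

variable [CommSemiring k] [Group G] {H : Subgroup G}

lemma restrict_mul_single_of_mem {g : G} (hg : g ∈ H) (x : k[G]) (r : k) :
    restrict H (x * single g r) = restrict H x * single g r := by
  induction x using MonoidAlgebra.induction_linear with
  | zero => simp
  | add x x' hx hx' => simp [add_mul, hx, hx']
  | single a c =>
    rw [single_mul_single]
    by_cases ha : a ∈ H
    · rw [restrict_single_of_mem ha, restrict_single_of_mem (H.mul_mem ha hg), single_mul_single]
    · rw [restrict_single_of_notMem ha, zero_mul,
        restrict_single_of_notMem (mt (H.mul_mem_cancel_right hg).1 ha)]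

lemma restrict_mul_of_mem_range {v : k[G]} (hv : v ∈ (mapDomainAlgHom k k H.subtype).range)
    (x : k[G]) : restrict H (x * v) = restrict H x * v := by
  obtain ⟨w, rfl⟩ := (AlgHom.mem_range _).1 hv
  clear hv
  induction w using MonoidAlgebra.induction_linear with
  | zero => simp
  | add w w' hw hw' => rw [map_add, mul_add, mul_add, map_add, hw, hw']
  | single g r => simpa using restrict_mul_single_of_mem g.2 x r

lemma restrict_add_restrict_mul_inv (hH : H.index = 2) {h : G} (hh : h ∉ H) (y : k[G]) :
    restrict H y + restrict H (y * of k G h⁻¹) * of k G h = y := by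
  induction y using MonoidAlgebra.induction_linear with
  | zero => simp
  | add y y' hy hy' =>
    conv_rhs => rw [← hy, ← hy']
    simp only [add_mul, map_add]
    abel
  | single g r =>
    have hgh : g * h⁻¹ ∈ H ↔ g ∉ H := by
      rw [Subgroup.mul_mem_iff_of_index_two hH, inv_mem_iff, iff_false_right hh]
    simp only [of_apply, single_mul_single, mul_one]
    by_cases hg : g ∈ H
    · rw [restrict_single_of_mem hg, restrict_single_of_notMem (mt hgh.1 (not_not.2 hg)),
        zero_mul, add_zero]
    · rw [restrict_single_of_notMem hg, restrict_single_of_mem (hgh.2 hg), single_mul_single,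
        inv_mul_cancel_right, mul_one, zero_add]

end RestrictSubgroup

section SelfDual

variable [CommRing k] [CommGroup G] {H : Subgroup G} {h : G} {v : k[G]}

lemma eq_restrict_mul_of_mul_eq_zero (hH : H.index = 2) (hh : h ∉ H)
    (hv : v ∈ (mapDomainAlgHom k k H.subtype).range) {y : k[G]}
    (hy : y * (1 + of k G h * v) = 0) : y = restrict H y * (1 - of k G h * v) := by
  have hy' : y * of k G h⁻¹ = -(y * v) := by
    have hhinv : of k G h * of k G h⁻¹ = 1 := by rw [← map_mul, mul_inv_cancel, map_one]
    linear_combination of k G h⁻¹ * hy - y * v * hhinv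
  calc y = restrict H y + restrict H (y * of k G h⁻¹) * of k G h :=
        (restrict_add_restrict_mul_inv hH hh y).symm
    _ = restrict H y * (1 - of k G h * v) := by
      rw [hy', map_neg, restrict_mul_of_mem_range hv]
      ring

theorem codeGen_one_add_mul_eq_dual [CharP k 2] (hH : H.index = 2) (hh : h ∉ H)
    (hh2 : h * h = 1) (hv : v ∈ (mapDomainAlgHom k k H.subtype).range) (hvv : v * v = 1)
    (hvinv : involution k G v = v) :
    (codeGen (1 + of k G h * v) : Set k[G]) =
      {y | ∀ x ∈ codeGen (1 + of k G h * v), bform x y = 0} := by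
  set u := 1 + of k G h * v
  have hofh : of k G h * of k G h = 1 := by rw [← map_mul, hh2, map_one]
  have hu_inv : involution k G u = u := by
    rw [map_add, map_one, map_mul, hvinv, involution_of, inv_eq_of_mul_eq_one_right hh2]
  have hu_sq : u * u = 0 := by
    linear_combination u * CharTwo.two_eq_zero (R := k[G]) + of k G h * of k G h * hvv + hofh
  ext y
  rw [SetLike.mem_coe, Set.mem_ofPred_eq, forall_bform_codeGen_eq_zero_iff_of_involution_eq hu_inv,
    mem_codeGen_iff]
  constructor
  · rintro ⟨c, rfl⟩
    rw [mul_comm, mul_assoc, hu_sq, mul_zero]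
  · intro hy
    have hy' := eq_restrict_mul_of_mul_eq_zero hH hh hv (y := y) (by rwa [mul_comm])
    rw [CharTwo.sub_eq_add] at hy'
    exact ⟨_, hy'.symm⟩

end SelfDual

def evenSubgroup (m : ℕ) : Subgroup (Gp m) :=
  (AddMonoidHom.toMultiplicative (AddMonoidHom.snd (Fin m → ZMod 4) (ZMod 2))).ker

lemma mem_evenSubgroup {m : ℕ} {g : Gp m} :
    g ∈ evenSubgroup m ↔ (Multiplicative.toAdd g).2 = 0 :=
  Iff.rfl

lemma index_evenSubgroup (m : ℕ) : (evenSubgroup m).index = 2 := by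
  rw [evenSubgroup, Subgroup.index_ker, MonoidHom.range_eq_top.2, Subgroup.card_top]
  · simp
  · exact fun x => ⟨Multiplicative.ofAdd (0, Multiplicative.toAdd x), rfl⟩

lemma agen_mem_evenSubgroup (m : ℕ) (i : Fin m) : agen m i ∈ evenSubgroup m := rfl

lemma hgen_notMem_evenSubgroup (m : ℕ) : hgen m ∉ evenSubgroup m := by
  simp [mem_evenSubgroup, hgen]

lemma hgen_mul_self (m : ℕ) : hgen m * hgen m = 1 := by
  rw [hgen, ← ofAdd_add, Prod.mk_add_mk, add_zero, show (1 + 1 : ZMod 2) = 0 by decide]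
  rfl

lemma agen_pow_four (m : ℕ) (i : Fin m) : agen m i ^ 4 = 1 := by
  rw [agen, ← ofAdd_nsmul, Prod.smul_mk, ← Pi.single_smul, show 4 • (1 : ZMod 4) = 0 by decide,
    Pi.single_zero, nsmul_zero]
  rfl

lemma um_mem_range (m : ℕ) :
    um m ∈ (mapDomainAlgHom (ZMod 2) (ZMod 2) (evenSubgroup m).subtype).range := by
  refine Subalgebra.prod_mem _ fun i _ => ?_
  have ha : of (ZMod 2) (Gp m) (agen m i) ∈
      (mapDomainAlgHom (ZMod 2) (ZMod 2) (evenSubgroup m).subtype).range :=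
    ⟨of _ _ ⟨agen m i, agen_mem_evenSubgroup m i⟩, by simp⟩
  exact add_mem (add_mem ha (pow_mem ha 2)) (pow_mem ha 3)

lemma um_mul_self (m : ℕ) : um m * um m = 1 := by
  rw [um, ← Finset.prod_mul_distrib]
  refine Finset.prod_eq_one fun i _ => ?_
  set x := of (ZMod 2) (Gp m) (agen m i)
  have hx4 : x ^ 4 = 1 := by rw [← map_pow, agen_pow_four, map_one]
  linear_combination
    (x ^ 2 + 1) * hx4 + (x ^ 2 + x ^ 3 + x ^ 4 + x ^ 5) * CharTwo.two_eq_zero (R := (ZMod 2)[Gp m])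

lemma involution_um (m : ℕ) : involution (ZMod 2) (Gp m) (um m) = um m := by
  rw [um, map_prod]
  refine Finset.prod_congr rfl fun i _ => ?_
  set x := of (ZMod 2) (Gp m) (agen m i)
  have hx4 : x ^ 4 = 1 := by rw [← map_pow, agen_pow_four, map_one]
  have hinv : involution (ZMod 2) (Gp m) x = x ^ 3 := by
    rw [involution_of, ← map_pow,
      inv_eq_of_mul_eq_one_right (by rw [← pow_succ', agen_pow_four])]
  rw [map_add, map_add, map_pow, map_pow, hinv]
  linear_combination (x ^ 5 + x + x ^ 2) * hx4

end GroupCode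

open GroupCode

theorem code_is_self_dual_general (m : ℕ) :
    (codeGen (uu m) : Set (MonoidAlgebra (ZMod 2) (Gp m))) =
      {y | ∀ x ∈ codeGen (uu m), bform x y = 0} :=
  codeGen_one_add_mul_eq_dual (index_evenSubgroup m) (hgen_notMem_evenSubgroup m)
    (hgen_mul_self m) (um_mem_range m) (um_mul_self m) (involution_um m)

theorem code_is_self_dual (m : ℕ) (hm : 1 ≤ m) :
    (codeGen (uu m) : Set (MonoidAlgebra (ZMod 2) (Gp m))) =
      {y | ∀ x ∈ codeGen (uu m), bform x y = 0} :=
  code_is_self_dual_general m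

end
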